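/- Let M > 0 and let λ : ℝ³ → ℝ be a smooth function with λ(x) ≥ 1 and |∇λ(x)| ≤ M λ(x) for all x ∈ ℝ³. Then there is a constant C depending only on M such that for every smooth vector field v ∈ H¹(ℝ³; ℝ³) with √λ·v ∈ L²(ℝ³) and √λ·∇v ∈ L²(ℝ³), one has ∫_{ℝ³} λ |∇v|² dx ≤ C ( ∫_{ℝ³} λ |div v|² dx + ∫_{ℝ³} λ |curl v|² dx + ∫_{ℝ³} λ |v|² dx ). -/

import Mathlib

open MeasureTheory Real Filter

noncomputable section

/-- Physical space `ℝ³` with its Euclidean structure. -/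
abbrev V3 : Type := EuclideanSpace ℝ (Fin 3)

/-- Spatial partial derivative `∂ᵢ` in the `i`-th coordinate direction. -/
noncomputable def pd (i : Fin 3) (f : V3 → ℝ) (x : V3) : ℝ :=
  fderiv ℝ f x (EuclideanSpace.single i 1)

/-- The background magnetic field `B₀ = (0,0,1)` (also the unit vector `e₃`). -/
noncomputable def B0 : V3 := WithLp.toLp 2 (fun i => if i = 2 then 1 else 0)

/-- The spatial gradient of a scalar function. -/
noncomputable def gradv (f : V3 → ℝ) (x : V3) : V3 := WithLp.toLp 2 (fun i => pd i f x)

/-- Spatial divergence of a vector field: `div v = ∂₁v¹ + ∂₂v² + ∂₃v³`. -/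
noncomputable def divg (v : V3 → V3) (x : V3) : ℝ := ∑ i, pd i (fun y => v y i) x

/-- Curl of a vector field:
`curl v = (∂₂v³ − ∂₃v², ∂₃v¹ − ∂₁v³, ∂₁v² − ∂₂v¹)`. -/
noncomputable def curlv (v : V3 → V3) (x : V3) : V3 := WithLp.toLp 2 (fun k =>
  if k = 0 then pd 1 (fun y => v y 2) x - pd 2 (fun y => v y 1) x
  else if k = 1 then pd 2 (fun y => v y 0) x - pd 0 (fun y => v y 2) x
  else pd 0 (fun y => v y 1) x - pd 1 (fun y => v y 0) x)

/-- Joint (time and space) smoothness of a time-dependent vector field. -/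
def Smooth2V (z : ℝ → V3 → V3) : Prop := ContDiff ℝ (⊤ : ℕ∞) (fun q : ℝ × V3 => z q.1 q.2)

/-- Joint (time and space) smoothness of a time-dependent scalar function. -/
def Smooth2S (f : ℝ → V3 → ℝ) : Prop := ContDiff ℝ (⊤ : ℕ∞) (fun q : ℝ × V3 => f q.1 q.2)

/-- The ideal incompressible MHD system in Elsässer (fluctuation) form:
`∂ₜz₊ + (z₋ − B₀)·∇z₊ = −∇p`, `∂ₜz₋ + (z₊ + B₀)·∇z₋ = −∇p`, `div z₊ = div z₋ = 0`. -/
def IsMHD (zp zm : ℝ → V3 → V3) (p : ℝ → V3 → ℝ) : Prop :=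
  (∀ t x i, deriv (fun s => zp s x i) t
      + ∑ j, (zm t x j - B0 j) * pd j (fun y => zp t y i) x = - pd i (p t) x) ∧
  (∀ t x i, deriv (fun s => zm s x i) t
      + ∑ j, (zp t x j + B0 j) * pd j (fun y => zm t y i) x = - pd i (p t) x) ∧
  (∀ t x, divg (zp t) x = 0) ∧
  (∀ t x, divg (zm t) x = 0)

/-- The Elsässer variable `Z₊ = z₊ + B₀`. -/
noncomputable def Zplus (zp : ℝ → V3 → V3) : ℝ → V3 → V3 := fun t x => zp t x + B0

/-- The Elsässer variable `Z₋ = z₋ − B₀`. -/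
noncomputable def Zminus (zm : ℝ → V3 → V3) : ℝ → V3 → V3 := fun t x => zm t x - B0

/-- `ψ` is the (complete) flow of the time-dependent vector field `Z`. -/
def IsFlowOf (Z : ℝ → V3 → V3) (ψ : ℝ → V3 → V3) : Prop :=
  (∀ y, ψ 0 y = y) ∧ ∀ t y, HasDerivAt (fun s => ψ s y) (Z t (ψ t y)) t

/-- The future scattering field `z(+∞;y) = z(0,y) − ∫₀^{+∞} (∇p·√(1+|Zo|²))(τ, ψ(τ,y)) dτ`,
where `Zo` is the opposite Elsässer variable and `ψ` its flow. -/
noncomputable def scatFuture (z : ℝ → V3 → V3) (p : ℝ → V3 → ℝ) (Zo : ℝ → V3 → V3)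
    (ψ : ℝ → V3 → V3) (y : V3) : V3 :=
  z 0 y - ∫ τ in Set.Ioi (0:ℝ), Real.sqrt (1 + ‖Zo τ (ψ τ y)‖^2) • gradv (p τ) (ψ τ y)

/-- The past scattering field `z(−∞;y) = z(0,y) − ∫₀^{−∞} (∇p·√(1+|Zo|²))(τ, ψ(τ,y)) dτ`. -/
noncomputable def scatPast (z : ℝ → V3 → V3) (p : ℝ → V3 → ℝ) (Zo : ℝ → V3 → V3)
    (ψ : ℝ → V3 → V3) (y : V3) : V3 :=
  z 0 y + ∫ τ in Set.Iio (0:ℝ), Real.sqrt (1 + ‖Zo τ (ψ τ y)‖^2) • gradv (p τ) (ψ τ y)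

/-- Iterated partial derivative `∂^β = ∂₁^{β 0} ∂₂^{β 1} ∂₃^{β 2}` for a multi-index `β`. -/
noncomputable def mD (β : Fin 3 → ℕ) (f : V3 → ℝ) : V3 → ℝ :=
  (pd 0)^[β 0] ((pd 1)^[β 1] ((pd 2)^[β 2] f))

/-- `D` is the `β`-th weak (distributional) derivative of `F` (componentwise). -/
def IsWeakDeriv (β : Fin 3 → ℕ) (F D : V3 → V3) : Prop :=
  ∀ φ : V3 → ℝ, ContDiff ℝ (⊤ : ℕ∞) φ → HasCompactSupport φ → ∀ i : Fin 3,
    ∫ y : V3, F y i * mD β φ y = (-1 : ℝ)^(β 0 + β 1 + β 2) * ∫ y : V3, D y i * φ y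

/-- The finite set of spatial multi-indices of total order at most `N`. -/
def mIdx (N : ℕ) : Finset (Fin 3 → ℕ) :=
  (Fintype.piFinset fun _ : Fin 3 => Finset.range (N+1)).filter fun β => β 0 + β 1 + β 2 ≤ N

/-- The squared weighted Sobolev norm
`‖F‖²_{H^N_ω} = Σ_{|β| ≤ N} ∫ (R² + y₃²)^ω |∂^β F(y)|² dy` (for classically differentiable `F`). -/
noncomputable def HSobSq (N : ℕ) (R ω : ℝ) (F : V3 → V3) : ℝ :=
  ∑ β ∈ mIdx N, ∫ y : V3, (R^2 + (y 2)^2) ^ ω * ∑ i, (mD β (fun z => F z i) y)^2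

/-- Schwartz-type decay in the spatial variables, locally uniformly in time. -/
def SchwartzLike (z : ℝ → V3 → V3) : Prop :=
  ∀ (n k : ℕ) (T : ℝ), ∃ C, ∀ τ x, |τ| ≤ T → (1+‖x‖)^n * ‖iteratedFDeriv ℝ k (z τ) x‖ ≤ C

/-- The quadratic source term `Σ_{i,j} ∂ᵢz₋ʲ ∂ⱼz₊ⁱ` of the pressure equation. -/
noncomputable def qsrc (zp zm : ℝ → V3 → V3) (τ : ℝ) (x : V3) : ℝ :=
  ∑ i, ∑ j, pd i (fun y => zm τ y j) x * pd j (fun y => zp τ y i) x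

/-- The Newtonian potential expression for the pressure:
`p(τ,x) = (1/4π) ∫ |x − x'|⁻¹ (Σ_{i,j} ∂ᵢz₋ʲ ∂ⱼz₊ⁱ)(τ,x') dx'`. -/
noncomputable def newt (zp zm : ℝ → V3 → V3) (τ : ℝ) (x : V3) : ℝ :=
  (1/(4*Real.pi)) * ∫ x' : V3, ‖x - x'‖⁻¹ * qsrc zp zm τ x'

/-- The squared Frobenius norm `|∇v|²` of the Jacobian of a vector field. -/
noncomputable def jacSq (v : V3 → V3) (x : V3) : ℝ :=
  ∑ i, ∑ j, (pd j (fun y => v y i) x)^2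

/-!
Pointwise, `|∇v|² − (div v)² − |curl v|²` is the divergence of the flux `w = (v·∇)v − v div v`:
the second derivatives cancel by the symmetry of the Hessian. Hence
`λ (|∇v|² − (div v)² − |curl v|²) = div (λ w) − ∇λ · w`, and `div (λ w)` integrates to zero over
`ℝ³` as soon as `λ w` and its divergence are integrable. By Cauchy–Schwarz `|w| ≤ 2√2 |v| |∇v|`,
so `|∇λ| ≤ M λ` bounds the error term `∇λ · w` by `λ (|∇v|²/2 + 4 M² |v|²)`, and the half of
`∫ λ |∇v|²` is absorbed into the left-hand side.
-/

open Topology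

theorem MeasureTheory.Integrable.continuous_mul_of_hasCompactSupport {α : Type*}
    [TopologicalSpace α] [MeasurableSpace α] [OpensMeasurableSpace α] {μ : Measure α}
    {f g : α → ℝ} (hf : Integrable f μ) (hg : Continuous g) (hgc : HasCompactSupport g) :
    Integrable (fun x => g x * f x) μ :=
  let ⟨_, hB⟩ := hg.bounded_above_of_compact_support hgc
  hf.bdd_mul hg.aestronglyMeasurable (.of_forall hB)

section Divergence

variable {E : Type*} [NormedAddCommGroup E] [NormedSpace ℝ E] [FiniteDimensional ℝ E]
  [MeasurableSpace E] [BorelSpace E] {μ : Measure E} [μ.IsAddHaarMeasure]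
  {ι : Type*} [Fintype ι]

theorem integral_mul_sum_fderiv_eq_neg {φ : E → ℝ} (hφ : ContDiff ℝ 1 φ)
    (hφc : HasCompactSupport φ) {F : ι → E → ℝ} (e : ι → E) (hF : ∀ i, ContDiff ℝ 1 (F i))
    (hFi : ∀ i, Integrable (F i) μ) :
    ∫ x, φ x * ∑ i, fderiv ℝ (F i) x (e i) ∂μ = -∑ i, ∫ x, fderiv ℝ φ x (e i) * F i x ∂μ := by
  have hdF : ∀ i, Integrable (fun x => φ x * fderiv ℝ (F i) x (e i)) μ := fun i =>
    (hφ.continuous.mul (((hF i).continuous_fderiv one_ne_zero).clm_apply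
      continuous_const)).integrable_of_hasCompactSupport hφc.mul_right
  simp_rw [Finset.mul_sum, ← Finset.sum_neg_distrib]
  rw [integral_finsetSum _ fun i _ => hdF i]
  refine Finset.sum_congr rfl fun i _ => integral_mul_fderiv_eq_neg_fderiv_mul_of_integrable
    ?_ (hdF i) ?_ (fun x _ => hφ.differentiable one_ne_zero x)
    (fun x _ => (hF i).differentiable one_ne_zero x)
  · exact (hFi i).continuous_mul_of_hasCompactSupport
      ((hφ.continuous_fderiv one_ne_zero).clm_apply continuous_const) (hφc.fderiv_apply ℝ _)
  · exact (hFi i).continuous_mul_of_hasCompactSupport hφ.continuous hφc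

theorem integral_sum_fderiv_eq_zero {F : ι → E → ℝ} (e : ι → E) (hF : ∀ i, ContDiff ℝ 1 (F i))
    (hFi : ∀ i, Integrable (F i) μ) (hdiv : Integrable (fun x => ∑ i, fderiv ℝ (F i) x (e i)) μ) :
    ∫ x, ∑ i, fderiv ℝ (F i) x (e i) ∂μ = 0 := by
  let χ : ContDiffBump (0 : E) := ⟨1, 2, one_pos, one_lt_two⟩
  have hχ : ContDiff ℝ 1 χ := χ.contDiff
  obtain ⟨B, hB⟩ := (hχ.continuous_fderiv one_ne_zero).bounded_above_of_compact_support
    (χ.hasCompactSupport.fderiv ℝ)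
  set D := fun x => ∑ i, fderiv ℝ (F i) x (e i)
  -- rescaled cutoffs `χ (c • x)`, which tend to `1` pointwise while their derivatives are `O(c)`
  have hlim : Tendsto (fun c : ℝ => ∫ x, χ (c • x) * D x ∂μ) (𝓝[≠] 0) (𝓝 (∫ x, D x ∂μ)) := by
    refine tendsto_integral_filter_of_dominated_convergence (fun x => ‖D x‖)
      (.of_forall fun c => (χ.continuous.comp (continuous_const_smul c)).aestronglyMeasurable.mul
        hdiv.aestronglyMeasurable)
      (.of_forall fun c => .of_forall fun x => ?_) hdiv.norm (.of_forall fun x => ?_)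
    · rw [norm_mul, Real.norm_of_nonneg (χ.nonneg' _)]
      exact mul_le_of_le_one_left (norm_nonneg _) (χ.le_one)
    · have : Tendsto (fun c : ℝ => χ (c • x)) (𝓝 0) (𝓝 (χ ((0 : ℝ) • x))) :=
        (χ.continuous.comp (continuous_id.smul continuous_const)).tendsto 0
      rw [zero_smul, χ.one_of_mem_closedBall (by simp [χ.rIn_pos.le])] at this
      simpa using (this.mono_left nhdsWithin_le_nhds).mul_const (D x)
  have hbound : ∀ c : ℝ, c ≠ 0 →
      ‖∫ x, χ (c • x) * D x ∂μ‖ ≤ |c| * ∑ i, B * ‖e i‖ * ∫ x, ‖F i x‖ ∂μ := by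
    intro c hc
    rw [integral_mul_sum_fderiv_eq_neg (φ := fun x => χ (c • x))
      (hχ.comp (contDiff_const_smul c)) (χ.hasCompactSupport.comp_smul hc) e hF hFi, norm_neg,
      Finset.mul_sum]
    refine (norm_sum_le _ _).trans (Finset.sum_le_sum fun i _ => ?_)
    refine (norm_integral_le_of_norm_le ((hFi i).norm.const_mul (|c| * B * ‖e i‖))
      (.of_forall fun x => ?_)).trans_eq (by rw [integral_const_mul]; ring)
    rw [fderiv_comp_smul, smul_apply, smul_eq_mul, norm_mul, norm_mul, Real.norm_eq_abs,
      mul_assoc |c| B]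
    gcongr
    exact (fderiv ℝ χ (c • x)).le_of_opNorm_le (hB (c • x)) (e i)
  have h0 : Tendsto (fun c : ℝ => ∫ x, χ (c • x) * D x ∂μ) (𝓝[≠] 0) (𝓝 0) := by
    refine squeeze_zero_norm' (eventually_nhdsWithin_of_forall hbound) ?_
    have : Tendsto (fun c : ℝ => |c| * ∑ i, B * ‖e i‖ * ∫ x, ‖F i x‖ ∂μ) (𝓝 0) (𝓝 0) := by
      simpa using (continuous_abs.tendsto (0 : ℝ)).mul_const _
    exact this.mono_left nhdsWithin_le_nhds
  exact tendsto_nhds_unique hlim h0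

end Divergence

section PartialDerivatives

variable {f g : V3 → ℝ} {x : V3}

theorem contDiff_pd {n : WithTop ℕ∞} (hf : ContDiff ℝ (n + 1) f) (i : Fin 3) :
    ContDiff ℝ n (pd i f) :=
  (hf.fderiv_right le_rfl).clm_apply contDiff_const

@[fun_prop]
theorem measurable_pd (i : Fin 3) (f : V3 → ℝ) : Measurable (pd i f) :=
  measurable_fderiv_apply_const ℝ f _

theorem pd_mul (hf : DifferentiableAt ℝ f x) (hg : DifferentiableAt ℝ g x) (i : Fin 3) :
    pd i (fun y => f y * g y) x = pd i f x * g x + f x * pd i g x := by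
  simp only [pd, fderiv_fun_mul hf hg, add_apply, smul_apply, smul_eq_mul]
  ring

theorem pd_sub (hf : DifferentiableAt ℝ f x) (hg : DifferentiableAt ℝ g x) (i : Fin 3) :
    pd i (fun y => f y - g y) x = pd i f x - pd i g x := by
  simp only [pd, fderiv_fun_sub hf hg, sub_apply]

theorem pd_sum {F : Fin 3 → V3 → ℝ} (hF : ∀ k, DifferentiableAt ℝ (F k) x) (i : Fin 3) :
    pd i (fun y => ∑ k, F k y) x = ∑ k, pd i (F k) x := by
  simp only [pd, fderiv_fun_sum fun k _ => hF k, sum_apply]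

theorem pd_comm (hf : ContDiff ℝ 2 f) (i j : Fin 3) (x : V3) :
    pd i (pd j f) x = pd j (pd i f) x := by
  have hsymm : IsSymmSndFDerivAt ℝ f x := hf.contDiffAt.isSymmSndFDerivAt (by simp)
  have hdf : Differentiable ℝ (fderiv ℝ f) :=
    (hf.fderiv_right (m := 1) le_rfl).differentiable one_ne_zero
  have hpd : ∀ a b, pd a (pd b f) x
      = fderiv ℝ (fderiv ℝ f) x (EuclideanSpace.single a 1) (EuclideanSpace.single b 1) := by
    intro a b
    unfold pd
    rw [fderiv_clm_apply (hdf x) (differentiableAt_const _)]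
    simp only [fderiv_fun_const, Pi.zero_apply, ContinuousLinearMap.comp_zero, zero_add,
      ContinuousLinearMap.flip_apply]
  rw [hpd, hpd, hsymm.eq]

end PartialDerivatives

theorem contDiff_coord {n : WithTop ℕ∞} {v : V3 → V3} (hv : ContDiff ℝ n v) (i : Fin 3) :
    ContDiff ℝ n (fun y => v y i) :=
  (EuclideanSpace.proj (𝕜 := ℝ) i).contDiff.comp hv

theorem norm_curlv_sq (v : V3 → V3) (x : V3) :
    ‖curlv v x‖ ^ 2 = (pd 1 (fun y => v y 2) x - pd 2 (fun y => v y 1) x) ^ 2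
      + (pd 2 (fun y => v y 0) x - pd 0 (fun y => v y 2) x) ^ 2
      + (pd 0 (fun y => v y 1) x - pd 1 (fun y => v y 0) x) ^ 2 := by
  simp [EuclideanSpace.real_norm_sq_eq, curlv, Fin.sum_univ_three]

theorem jacSq_sub_norm_curlv_sq (v : V3 → V3) (x : V3) :
    jacSq v x - ‖curlv v x‖ ^ 2 = ∑ i, ∑ j, pd j (fun y => v y i) x * pd i (fun y => v y j) x := by
  simp only [norm_curlv_sq, jacSq, Fin.sum_univ_three]
  ring

def divCurlFlux (v : V3 → V3) (j : Fin 3) (x : V3) : ℝ :=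
  ∑ i, v x i * pd i (fun y => v y j) x - v x j * divg v x

@[fun_prop]
theorem measurable_divCurlFlux {v : V3 → V3} (hv : Measurable v) (j : Fin 3) :
    Measurable (divCurlFlux v j) := by
  unfold divCurlFlux divg; fun_prop

theorem contDiff_divCurlFlux {n : WithTop ℕ∞} {v : V3 → V3} (hv : ContDiff ℝ (n + 1) v)
    (j : Fin 3) : ContDiff ℝ n (divCurlFlux v j) := by
  have hv' : ContDiff ℝ n v := hv.of_le le_self_add
  unfold divCurlFlux divg
  exact (ContDiff.sum fun i _ =>
      (contDiff_coord hv' i).mul (contDiff_pd (contDiff_coord hv j) i)).sub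
    ((contDiff_coord hv' j).mul (ContDiff.sum fun i _ => contDiff_pd (contDiff_coord hv i) i))

theorem pd_divCurlFlux {v : V3 → V3} (hv : ContDiff ℝ 2 v) (j : Fin 3) (x : V3) :
    pd j (divCurlFlux v j) x
      = ∑ i, (pd j (fun y => v y i) x * pd i (fun y => v y j) x
          + v x i * pd j (pd i fun y => v y j) x)
        - (pd j (fun y => v y j) x * divg v x + v x j * ∑ i, pd j (pd i fun y => v y i) x) := by
  have hd : ∀ i, DifferentiableAt ℝ (fun y => v y i) x := fun i =>
    (contDiff_coord hv i).differentiable two_ne_zero x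
  have hdd : ∀ i k, DifferentiableAt ℝ (pd i fun y => v y k) x := fun i k =>
    (contDiff_pd (n := 1) (contDiff_coord hv k) i).differentiable one_ne_zero x
  have hdiv : DifferentiableAt ℝ (divg v) x := DifferentiableAt.fun_sum fun i _ => hdd i i
  have hpd_div : pd j (divg v) x = ∑ i, pd j (pd i fun y => v y i) x :=
    pd_sum (fun i => hdd i i) j
  unfold divCurlFlux
  rw [pd_sub (DifferentiableAt.fun_sum fun i _ => (hd i).fun_mul (hdd i j)) ((hd j).fun_mul hdiv),
    pd_sum (fun i => (hd i).fun_mul (hdd i j)), pd_mul (hd j) hdiv, hpd_div]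
  simp only [pd_mul (hd _) (hdd _ j)]

theorem sum_pd_divCurlFlux {v : V3 → V3} (hv : ContDiff ℝ 2 v) (x : V3) :
    ∑ j, pd j (divCurlFlux v j) x = jacSq v x - (divg v x) ^ 2 - ‖curlv v x‖ ^ 2 := by
  have hcomm : ∀ i j k, pd i (pd j fun y => v y k) x = pd j (pd i fun y => v y k) x :=
    fun i j k => pd_comm (contDiff_coord hv k) i j x
  rw [sub_sub, add_comm _ (‖curlv v x‖ ^ 2), ← sub_sub, jacSq_sub_norm_curlv_sq]
  simp only [pd_divCurlFlux hv, divg, Fin.sum_univ_three, hcomm 1 0, hcomm 2 0, hcomm 2 1]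
  ring

section PointwiseBounds

variable (v : V3 → V3) (x : V3)

theorem jacSq_nonneg : 0 ≤ jacSq v x := by
  unfold jacSq; positivity

theorem sq_divg_le : divg v x ^ 2 ≤ 3 * jacSq v x := by
  calc divg v x ^ 2 = (∑ i, 1 * pd i (fun y => v y i) x) ^ 2 := by simp [divg]
    _ ≤ (∑ _i : Fin 3, (1 : ℝ) ^ 2) * ∑ i, pd i (fun y => v y i) x ^ 2 :=
      Finset.sum_mul_sq_le_sq_mul_sq _ _ _
    _ ≤ 3 * jacSq v x := by
      simp only [one_pow, Finset.sum_const, Finset.card_univ, Fintype.card_fin, nsmul_eq_mul,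
        Nat.cast_ofNat, mul_one, jacSq]
      gcongr with i
      exact Finset.single_le_sum (f := fun j => pd j (fun y => v y i) x ^ 2)
        (fun _ _ => sq_nonneg _) (Finset.mem_univ i)

theorem norm_curlv_sq_le : ‖curlv v x‖ ^ 2 ≤ 2 * jacSq v x := by
  rw [norm_curlv_sq]
  simp only [jacSq, Fin.sum_univ_three]
  nlinarith [sq_nonneg (pd 1 (fun y => v y 2) x + pd 2 (fun y => v y 1) x),
    sq_nonneg (pd 2 (fun y => v y 0) x + pd 0 (fun y => v y 2) x),
    sq_nonneg (pd 0 (fun y => v y 1) x + pd 1 (fun y => v y 0) x),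
    sq_nonneg (pd 0 (fun y => v y 0) x), sq_nonneg (pd 1 (fun y => v y 1) x),
    sq_nonneg (pd 2 (fun y => v y 2) x)]

theorem sum_divCurlFlux_sq_le : ∑ j, divCurlFlux v j x ^ 2 ≤ 8 * ‖v x‖ ^ 2 * jacSq v x := by
  have hcs : ∀ j, (∑ i, v x i * pd i (fun y => v y j) x) ^ 2
      ≤ ‖v x‖ ^ 2 * ∑ i, pd i (fun y => v y j) x ^ 2 := fun j => by
    rw [EuclideanSpace.real_norm_sq_eq]
    exact Finset.sum_mul_sq_le_sq_mul_sq _ _ _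
  calc ∑ j, divCurlFlux v j x ^ 2
      ≤ ∑ j, (2 * (∑ i, v x i * pd i (fun y => v y j) x) ^ 2 + 2 * (v x j ^ 2 * divg v x ^ 2)) :=
        Finset.sum_le_sum fun j _ => by
          unfold divCurlFlux
          nlinarith [sq_nonneg (∑ i, v x i * pd i (fun y => v y j) x + v x j * divg v x)]
    _ ≤ ∑ j, (2 * (‖v x‖ ^ 2 * ∑ i, pd i (fun y => v y j) x ^ 2)
          + 2 * (v x j ^ 2 * divg v x ^ 2)) := by
        gcongr with j; exact hcs j
    _ = 2 * ‖v x‖ ^ 2 * jacSq v x + 2 * ‖v x‖ ^ 2 * divg v x ^ 2 := by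
        simp only [Finset.sum_add_distrib, ← Finset.mul_sum, ← Finset.sum_mul,
          EuclideanSpace.real_norm_sq_eq, jacSq]
        ring
    _ ≤ 8 * ‖v x‖ ^ 2 * jacSq v x := by
        nlinarith [sq_divg_le v x, sq_nonneg ‖v x‖]

theorem abs_divCurlFlux_le (j : Fin 3) : |divCurlFlux v j x| ≤ 2 * ‖v x‖ ^ 2 + 2 * jacSq v x := by
  have hj : divCurlFlux v j x ^ 2 ≤ ∑ j, divCurlFlux v j x ^ 2 :=
    Finset.single_le_sum (f := fun j => divCurlFlux v j x ^ 2) (fun _ _ => sq_nonneg _)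
      (Finset.mem_univ j)
  refine abs_le_of_sq_le_sq ?_ (by positivity [jacSq_nonneg v x])
  nlinarith [sum_divCurlFlux_sq_le v x, sq_nonneg (‖v x‖ ^ 2 - jacSq v x),
    jacSq_nonneg v x, sq_nonneg ‖v x‖]

theorem abs_sum_pd_mul_divCurlFlux_le {lam : V3 → ℝ} {M : ℝ} (hlam : 0 ≤ lam x)
    (hgrad : ‖gradv lam x‖ ≤ M * lam x) :
    |∑ j, pd j lam x * divCurlFlux v j x|
      ≤ 1 / 2 * (lam x * jacSq v x) + 4 * M ^ 2 * (lam x * ‖v x‖ ^ 2) := by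
  have hgrad_sq : ∑ j, pd j lam x ^ 2 ≤ (M * lam x) ^ 2 := by
    have := pow_le_pow_left₀ (norm_nonneg _) hgrad 2
    rwa [EuclideanSpace.real_norm_sq_eq] at this
  refine abs_le_of_sq_le_sq ?_ (by positivity [jacSq_nonneg v x])
  calc (∑ j, pd j lam x * divCurlFlux v j x) ^ 2
      ≤ (∑ j, pd j lam x ^ 2) * ∑ j, divCurlFlux v j x ^ 2 := Finset.sum_mul_sq_le_sq_mul_sq _ _ _
    _ ≤ (M * lam x) ^ 2 * (8 * ‖v x‖ ^ 2 * jacSq v x) :=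
        mul_le_mul hgrad_sq (sum_divCurlFlux_sq_le v x) (by positivity) (by positivity)
    _ ≤ _ := by
        nlinarith [sq_nonneg (lam x * (1 / 2 * jacSq v x - 4 * M ^ 2 * ‖v x‖ ^ 2))]

end PointwiseBounds

theorem integral_weight_mul_jacSq_eq {lam : V3 → ℝ} {v : V3 → V3} (hlam : ContDiff ℝ 1 lam)
    (hlam0 : ∀ x, 0 ≤ lam x) (hv : ContDiff ℝ 2 v)
    (hJ : Integrable fun x => lam x * jacSq v x)
    (hw : ∀ j, Integrable fun x => lam x * divCurlFlux v j x)
    (hE : Integrable fun x => ∑ j, pd j lam x * divCurlFlux v j x) :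
    ∫ x, lam x * jacSq v x = (∫ x, lam x * divg v x ^ 2) + (∫ x, lam x * ‖curlv v x‖ ^ 2)
      - ∫ x, ∑ j, pd j lam x * divCurlFlux v j x := by
  have hlam_meas : Measurable lam := hlam.continuous.measurable
  have hD : Integrable fun x => lam x * divg v x ^ 2 := by
    refine (hJ.const_mul 3).mono' (by unfold divg; fun_prop) (.of_forall fun x => ?_)
    rw [Real.norm_of_nonneg (by positivity [hlam0 x])]
    nlinarith [sq_divg_le v x, hlam0 x]
  have hC : Integrable fun x => lam x * ‖curlv v x‖ ^ 2 := by
    refine (hJ.const_mul 2).mono' (by simp_rw [norm_curlv_sq]; fun_prop) (.of_forall fun x => ?_)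
    rw [Real.norm_of_nonneg (by positivity [hlam0 x])]
    nlinarith [norm_curlv_sq_le v x, hlam0 x]
  have hdiv : ∀ x, ∑ j, pd j (fun y => lam y * divCurlFlux v j y) x
      = ∑ j, pd j lam x * divCurlFlux v j x
        + (lam x * jacSq v x - lam x * divg v x ^ 2 - lam x * ‖curlv v x‖ ^ 2) := fun x => by
    have hw1 : ∀ j, DifferentiableAt ℝ (divCurlFlux v j) x := fun j =>
      (contDiff_divCurlFlux (n := 1) hv j).differentiable one_ne_zero x
    simp only [pd_mul (hlam.differentiable one_ne_zero x) (hw1 _), Finset.sum_add_distrib,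
      ← Finset.mul_sum, sum_pd_divCurlFlux hv]
    ring
  have hJD : Integrable fun x => lam x * jacSq v x - lam x * divg v x ^ 2 := hJ.sub hD
  have hrest : Integrable fun x =>
      lam x * jacSq v x - lam x * divg v x ^ 2 - lam x * ‖curlv v x‖ ^ 2 := hJD.sub hC
  have hzero := integral_sum_fderiv_eq_zero (μ := volume)
    (F := fun j y => lam y * divCurlFlux v j y) (fun j => EuclideanSpace.single j 1)
    (fun j => hlam.mul (contDiff_divCurlFlux hv j)) hw ?_
  · change ∫ x, ∑ j, pd j (fun y => lam y * divCurlFlux v j y) x = 0 at hzero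
    simp only [hdiv] at hzero
    rw [integral_add hE hrest, integral_sub hJD hC, integral_sub hJ hD] at hzero
    linarith
  · change Integrable fun x => ∑ j, pd j (fun y => lam y * divCurlFlux v j y) x
    simp only [hdiv]
    exact hE.add hrest

theorem integrable_weight_mul_divCurlFlux {lam : V3 → ℝ} {v : V3 → V3} (hlam : Continuous lam)
    (hlam0 : ∀ x, 0 ≤ lam x) (hvv : Integrable fun x => lam x * ‖v x‖ ^ 2)
    (hJ : Integrable fun x => lam x * jacSq v x) (hvm : Measurable v) (j : Fin 3) :
    Integrable fun x => lam x * divCurlFlux v j x := by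
  refine ((hvv.const_mul 2).add (hJ.const_mul 2)).mono' ?_ (.of_forall fun x => ?_)
  · fun_prop
  · rw [norm_mul, Real.norm_of_nonneg (hlam0 x), Real.norm_eq_abs, Pi.add_apply]
    nlinarith [abs_divCurlFlux_le v x j, hlam0 x]

theorem integrable_sum_pd_mul_divCurlFlux {lam : V3 → ℝ} {v : V3 → V3} {M : ℝ}
    (hlam0 : ∀ x, 0 ≤ lam x) (hgrad : ∀ x, ‖gradv lam x‖ ≤ M * lam x)
    (hvv : Integrable fun x => lam x * ‖v x‖ ^ 2) (hJ : Integrable fun x => lam x * jacSq v x)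
    (hvm : Measurable v) :
    Integrable fun x => ∑ j, pd j lam x * divCurlFlux v j x := by
  refine ((hJ.const_mul (1 / 2)).add (hvv.const_mul (4 * M ^ 2))).mono' ?_
    (.of_forall fun x => ?_)
  · fun_prop
  · rw [Real.norm_eq_abs, Pi.add_apply]
    exact abs_sum_pd_mul_divCurlFlux_le v x (hlam0 x) (hgrad x)

theorem stmt5_weighted_div_curl_general (M : ℝ) :
    ∃ C : ℝ, 0 < C ∧
    ∀ lam : V3 → ℝ, ContDiff ℝ (⊤ : ℕ∞) lam → (∀ x, 1 ≤ lam x) →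
      (∀ x, ‖gradv lam x‖ ≤ M * lam x) →
    ∀ v : V3 → V3, ContDiff ℝ (⊤ : ℕ∞) v →
      Integrable (fun x : V3 => ‖v x‖^2) →
      Integrable (fun x : V3 => jacSq v x) →
      Integrable (fun x : V3 => lam x * ‖v x‖^2) →
      Integrable (fun x : V3 => lam x * jacSq v x) →
      (∫ x : V3, lam x * jacSq v x) ≤
        C * ((∫ x : V3, lam x * (divg v x)^2)
           + (∫ x : V3, lam x * ‖curlv v x‖^2)
           + (∫ x : V3, lam x * ‖v x‖^2)) := by
  refine ⟨2 + 8 * M ^ 2, by positivity, fun lam hlam hlam1 hgrad v hv _ _ hvv hJ => ?_⟩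
  have hlam0 : ∀ x, 0 ≤ lam x := fun x => zero_le_one.trans (hlam1 x)
  have hE := fun x => abs_sum_pd_mul_divCurlFlux_le v x (hlam0 x) (hgrad x)
  have hEint := integrable_sum_pd_mul_divCurlFlux hlam0 hgrad hvv hJ hv.continuous.measurable
  have hid := integral_weight_mul_jacSq_eq (hlam.of_le (WithTop.coe_le_coe.mpr le_top)) hlam0
    (hv.of_le (WithTop.coe_le_coe.mpr le_top)) hJ
    (integrable_weight_mul_divCurlFlux hlam.continuous hlam0 hvv hJ hv.continuous.measurable) hEint
  have hEbound : |∫ x, ∑ j, pd j lam x * divCurlFlux v j x|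
      ≤ 1 / 2 * (∫ x, lam x * jacSq v x) + 4 * M ^ 2 * (∫ x, lam x * ‖v x‖ ^ 2) := by
    rw [← integral_const_mul, ← integral_const_mul,
      ← integral_add (hJ.const_mul _) (hvv.const_mul _)]
    exact (abs_integral_le_integral_abs).trans
      (integral_mono hEint.abs ((hJ.const_mul _).add (hvv.const_mul _)) hE)
  have hD : 0 ≤ ∫ x, lam x * divg v x ^ 2 := integral_nonneg fun x => by positivity [hlam0 x]
  have hC : 0 ≤ ∫ x, lam x * ‖curlv v x‖ ^ 2 := integral_nonneg fun x => by positivity [hlam0 x]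
  have hV : 0 ≤ ∫ x, lam x * ‖v x‖ ^ 2 := integral_nonneg fun x => by positivity [hlam0 x]
  nlinarith [abs_le.mp hEbound, mul_nonneg (sq_nonneg M) (add_nonneg hD hC)]

/-- Weighted div-curl lemma.  For `λ ≥ 1` smooth with `|∇λ| ≤ M λ`, and any
smooth `v ∈ H¹(ℝ³;ℝ³)` with `√λ v, √λ ∇v ∈ L²`:
`∫ λ|∇v|² ≤ C (∫ λ|div v|² + ∫ λ|curl v|² + ∫ λ|v|²)`, with `C = C(M)`. -/
theorem stmt5_weighted_div_curl (M : ℝ) (hM : 0 < M) :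
    ∃ C : ℝ, 0 < C ∧
    ∀ lam : V3 → ℝ, ContDiff ℝ (⊤ : ℕ∞) lam → (∀ x, 1 ≤ lam x) →
      (∀ x, ‖gradv lam x‖ ≤ M * lam x) →
    ∀ v : V3 → V3, ContDiff ℝ (⊤ : ℕ∞) v →
      Integrable (fun x : V3 => ‖v x‖^2) →
      Integrable (fun x : V3 => jacSq v x) →
      Integrable (fun x : V3 => lam x * ‖v x‖^2) →
      Integrable (fun x : V3 => lam x * jacSq v x) →
      (∫ x : V3, lam x * jacSq v x) ≤
        C * ((∫ x : V3, lam x * (divg v x)^2)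
           + (∫ x : V3, lam x * ‖curlv v x‖^2)
           + (∫ x : V3, lam x * ‖v x‖^2)) :=
  stmt5_weighted_div_curl_general M
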